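/- Suppose Γ is a discrete subgroup of PSL(2,ℝ) × G containing a semi-parabolic element γ = (f u f⁻¹, g) with u ∈ U − {Id}. Then for any g' ∈ G, the D⁺-semi-orbit of the point x = Γ(f,g') in X = Γ\(PSL(2,ℝ) × G) is divergent: no sequence x·d_n with d_n = diag(λ_n, λ_n⁻¹), λ_n → +∞, converges in X. -/

import Mathlib

open Filter Topology
open scoped MatrixGroups

instance : TopologicalSpace SL(2, ℝ) := instTopologicalSpaceSubtype

/-- The upper unipotent matrix `[[1,t],[0,1]]` in `SL(2,ℝ)`. -/
def uni (t : ℝ) : SL(2, ℝ) := ⟨!![1, t; 0, 1], by simp [Matrix.det_fin_two_of]⟩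

/-- The diagonal matrix `diag(l, l⁻¹)` in `SL(2,ℝ)`, for `l ≠ 0`. -/
noncomputable def dmat (l : ℝ) (hl : l ≠ 0) : SL(2, ℝ) :=
  ⟨!![l, 0; 0, l⁻¹], by simp [Matrix.det_fin_two_of, mul_inv_cancel₀ hl]⟩

/-!
If `Γ (f, g') d_n → Γ x`, there are `γ_n ∈ Γ` with `γ_n (f, g') d_n → x`. Conjugating by
`(f, g') d_n` turns `γ = (f u f⁻¹, g)` into `(d_n⁻¹ u d_n, g'⁻¹ g g')`, and `d_n⁻¹ u d_n → 1`,
so the `Γ`-conjugates `γ_n γ γ_n⁻¹` accumulate at `x (1, g'⁻¹ g g') x⁻¹`, whose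
`SL(2,ℝ)`-component is trivial. Discreteness of `Γ` makes these conjugates eventually constant,
so one of them specializes to that point (`G` need not be Hausdorff), and hence has trivial `SL(2,ℝ)`-component; but it is
conjugate to `γ`, whose component `f u f⁻¹` is not trivial.
-/

instance : IsTopologicalGroup SL(2, ℝ) := Matrix.SpecialLinearGroup.topologicalGroup

instance : T1Space SL(2, ℝ) := Matrix.SpecialLinearGroup.instT1Space

lemma continuous_uni : Continuous uni := by
  refine continuous_induced_rng.mpr (continuous_matrix fun i j => ?_)
  fin_cases i <;> fin_cases j <;> simp <;> fun_prop

lemma uni_eq_one_iff {t : ℝ} : uni t = 1 ↔ t = 0 := by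
  refine ⟨fun h => ?_, fun h => ?_⟩
  · simpa [uni] using congrArg (fun A : SL(2, ℝ) => (A : Matrix (Fin 2) (Fin 2) ℝ) 0 1) h
  · ext i j
    fin_cases i <;> fin_cases j <;> simp [uni, h]

lemma uni_mul_dmat (t l : ℝ) (hl : l ≠ 0) : uni t * dmat l hl = dmat l hl * uni (t / l ^ 2) := by
  apply Subtype.ext
  change !![1, t; 0, 1] * !![l, 0; 0, l⁻¹] = !![l, 0; 0, l⁻¹] * !![1, t / l ^ 2; 0, 1]
  rw [Matrix.mul_fin_two, Matrix.mul_fin_two]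
  ext i j
  fin_cases i <;> fin_cases j <;> simp [field]

section DiscreteSubgroup

variable {H : Type*} [Group H] [TopologicalSpace H] [IsTopologicalGroup H]

theorem Subgroup.exists_nhds_inter_subsingleton (Γ : Subgroup H) [DiscreteTopology Γ] (x : H) :
    ∃ N ∈ 𝓝 x, (N ∩ Γ).Subsingleton := by
  obtain ⟨U, hU, -, hΓU⟩ := IsDiscrete.exists_nhds_eq_one_of_image_mulLeft_inter_nonempty Γ
    (isDiscrete_iff_discreteTopology.mpr ‹_›)
  refine ⟨(· * x⁻¹) ⁻¹' U, (continuous_mul_const x⁻¹).continuousAt.preimage_mem_nhds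
    (by simpa using hU), ?_⟩
  rintro a ⟨ha, haΓ⟩ b ⟨hb, hbΓ⟩
  have : b * a⁻¹ = 1 := hΓU _ (Γ.mul_mem hbΓ (Γ.inv_mem haΓ))
    ⟨b * x⁻¹, ⟨a * x⁻¹, ha, by group⟩, hb⟩
  exact (mul_inv_eq_one.mp this).symm

theorem Subgroup.exists_specializes_of_frequently (Γ : Subgroup H) [DiscreteTopology Γ]
    {S : Set H} (hS : S ⊆ Γ) {x : H} (h : ∃ᶠ y in 𝓝 x, y ∈ S) : ∃ y ∈ S, y ⤳ x := by
  obtain ⟨N, hN, hNΓ⟩ := Γ.exists_nhds_inter_subsingleton x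
  obtain ⟨y, hyN, hyS⟩ := frequently_iff.mp h hN
  refine ⟨y, hyS, specializes_iff_mem_closure.mpr (mem_closure_iff_nhds.mpr fun V hV => ?_)⟩
  obtain ⟨z, ⟨hzV, hzN⟩, hzS⟩ := frequently_iff.mp h (inter_mem hV hN)
  exact ⟨y, by rwa [hNΓ ⟨hyN, hS hyS⟩ ⟨hzN, hS hzS⟩], rfl⟩

end DiscreteSubgroup

theorem MulAction.eventually_exists_smul_mem_of_tendsto {Γ T ι : Type*} [Group Γ]
    [TopologicalSpace T] [MulAction Γ T] [ContinuousConstSMul Γ T] {l : Filter ι} {z : ι → T}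
    {x : T} (hz : Tendsto (fun n => Quotient.mk (orbitRel Γ T) (z n)) l
      (𝓝 (Quotient.mk (orbitRel Γ T) x)))
    {U : Set T} (hU : U ∈ 𝓝 x) : ∀ᶠ n in l, ∃ γ : Γ, γ • z n ∈ U := by
  filter_upwards [hz (isOpenMap_quotient_mk'_mul.image_mem_nhds hU)] with n ⟨w, hwU, hw⟩
  obtain ⟨γ, rfl⟩ := (orbitRel_apply (G := Γ)).mp (Quotient.exact hw)
  exact ⟨γ, hwU⟩

theorem Subgroup.frequently_conj_mem_nhds {H ι : Type*} [Group H] [TopologicalSpace H]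
    [IsTopologicalGroup H] (Γ : Subgroup H) {l : Filter ι} [l.NeBot] {z c : ι → H}
    {γ₀ c₀ x : H} (hconj : ∀ n, γ₀ * z n = z n * c n) (hc : Tendsto c l (𝓝 c₀))
    (hz : Tendsto (fun n => Quotient.mk (MulAction.orbitRel Γ H) (z n)) l
      (𝓝 (Quotient.mk (MulAction.orbitRel Γ H) x))) :
    ∃ᶠ β in 𝓝 (x * c₀ * x⁻¹), ∃ γ ∈ Γ, β = γ * γ₀ * γ⁻¹ := by
  refine frequently_iff.mpr fun {N} hN => ?_
  have hΦ : Tendsto (fun p : H × H => p.1 * p.2 * p.1⁻¹) (𝓝 x ×ˢ 𝓝 c₀) (𝓝 (x * c₀ * x⁻¹)) := by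
    rw [← nhds_prod_eq]
    exact (by fun_prop : Continuous fun p : H × H => p.1 * p.2 * p.1⁻¹).tendsto _
  obtain ⟨U, hU, T, hT, hUT⟩ := mem_prod_iff.mp (hΦ hN)
  obtain ⟨n, ⟨γ, hγU⟩, hcT⟩ :=
    ((MulAction.eventually_exists_smul_mem_of_tendsto hz hU).and (hc hT)).exists
  have hγ₀ : γ₀ = z n * c n * (z n)⁻¹ := by rw [← hconj n]; group
  refine ⟨_, hUT (Set.mk_mem_prod hγU hcT), γ, γ.2, ?_⟩
  simp only [Subgroup.smul_def, smul_eq_mul, hγ₀]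
  group

/-- If a discrete subgroup `Γ` of `PSL(2,ℝ) × G` contains a
semi-parabolic element `γ = (f·u·f⁻¹, g)` with `u ∈ U − {Id}`, then for any `g' ∈ G` the
`D⁺`-semi-orbit of `x = Γ(f,g')` in `X = Γ\(PSL(2,ℝ) × G)` is divergent: no sequence
`x·d_n`, with `d_n = diag(λ_n, λ_n⁻¹)` and `λ_n → +∞`, converges in `X`. -/
theorem stmt_12 (G : Type*) [Group G] [TopologicalSpace G] [IsTopologicalGroup G]
    (Γ : Subgroup (SL(2, ℝ) × G)) (hdisc : DiscreteTopology Γ)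
    (f : SL(2, ℝ)) (g : G) (t : ℝ) (ht : t ≠ 0) (hmem : (f * uni t * f⁻¹, g) ∈ Γ)
    (g' : G) (lam : ℕ → ℝ) (hgt : ∀ n, 1 < lam n) (hlam : Tendsto lam atTop atTop) :
    ¬ ∃ y : Quotient (MulAction.orbitRel Γ (SL(2, ℝ) × G)),
      Tendsto (fun n => Quotient.mk (MulAction.orbitRel Γ (SL(2, ℝ) × G))
          ((f, g') * (dmat (lam n) ((zero_lt_one.trans (hgt n)).ne'), 1)))
        atTop (𝓝 y) := by
  rintro ⟨⟨x⟩, hx⟩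
  set z : ℕ → SL(2, ℝ) × G :=
    fun n => (f, g') * (dmat (lam n) ((zero_lt_one.trans (hgt n)).ne'), 1) with hz
  have hconj : ∀ n, (f * uni t * f⁻¹, g) * z n = z n * (uni (t / lam n ^ 2), g'⁻¹ * g * g') := by
    intro n
    ext
    · simp only [hz, Prod.fst_mul, mul_assoc, inv_mul_cancel_left, uni_mul_dmat]
    · simp only [hz, Prod.snd_mul]; group
  have hc : Tendsto (fun n => (uni (t / lam n ^ 2), g'⁻¹ * g * g')) atTop
      (𝓝 (1, g'⁻¹ * g * g')) := by
    have hs : Tendsto (fun n => t / lam n ^ 2) atTop (𝓝 0) :=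
      tendsto_const_nhds.div_atTop ((tendsto_pow_atTop two_ne_zero).comp hlam)
    simpa only [Function.comp_def, uni_eq_one_iff.mpr rfl] using
      ((continuous_uni.tendsto 0).comp hs).prodMk_nhds tendsto_const_nhds
  obtain ⟨_, ⟨γ, hγ, rfl⟩, hspec⟩ := Γ.exists_specializes_of_frequently
    (by rintro _ ⟨γ, hγ, rfl⟩; exact Γ.mul_mem (Γ.mul_mem hγ hmem) (Γ.inv_mem hγ))
    (Γ.frequently_conj_mem_nhds hconj hc hx)
  exact ht (by simpa [uni_eq_one_iff] using (hspec.map continuous_fst).eq)
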